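/- Contraction of the decoupled TTSA recursion matrices: assume (A4), that ‖I − β_k Δ‖_{QΔ} ≤ 1 − aΔ β_k and ‖I − γ_k A22‖_{Q22} ≤ 1 − a22 γ_k for all k (which holds for small enough step sizes), that ‖L_k‖ ≤ ℓ∞ β_k/γ_k for all k, and that the step-size ratio r_step := c_{0,β}/c_{0,γ} satisfies r_step ≤ aΔ/(2‖A12‖√κΔ ℓ∞) and r_step ≤ a22/(2‖A12‖√κ22 c∞) with c∞ := ℓ∞ r_step + ‖A22⁻¹A21‖. Then for every k: ‖I − β_k B11^k‖_{QΔ} ≤ 1 − (1/2) β_k aΔ and ‖I − γ_k B22^k‖_{Q22} ≤ 1 − (1/2) γ_k a22, where B11^k := Δ − A12 L_k, D_k := L_{k+1} + A22⁻¹A21, and B22^k := (β_k/γ_k) D_k A12 + A22. -/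

import Mathlib

open Real Matrix

noncomputable section

/-- Vectors in `ℝ^d` with the Euclidean norm. -/
abbrev Vec (d : ℕ) := EuclideanSpace ℝ (Fin d)

/-- Real `m × n` matrices. -/
abbrev Mat (m n : ℕ) := Matrix (Fin m) (Fin n) ℝ

/-- Action of a matrix on a Euclidean vector. -/
def mulVecE {m n : ℕ} (A : Mat m n) (x : Vec n) : Vec m :=
  WithLp.toLp 2 (fun i => ∑ j, A i j * x j)

/-- Operator norm of a matrix with respect to Euclidean norms. -/
def opNorm {m n : ℕ} (A : Mat m n) : ℝ :=
  sSup {c : ℝ | ∃ x : Vec n, ‖x‖ ≤ 1 ∧ c = ‖mulVecE A x‖}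

/-- `Q`-weighted norm `‖x‖_Q = √(xᵀ Q x)`. -/
def qNorm {d : ℕ} (Q : Mat d d) (x : Vec d) : ℝ :=
  Real.sqrt (∑ i, ∑ j, x i * Q i j * x j)

/-- Matrix norm induced by the `Q`-weighted vector norm. -/
def qOpNorm {d : ℕ} (Q B : Mat d d) : ℝ :=
  sSup {c : ℝ | ∃ x : Vec d, x ≠ 0 ∧ c = qNorm Q (mulVecE B x) / qNorm Q x}

/-- Smallest value of the Rayleigh quotient. -/
def lambdaMin {d : ℕ} (A : Mat d d) : ℝ :=
  sInf {r : ℝ | ∃ x : Vec d, ‖x‖ = 1 ∧ r = ∑ i, ∑ j, x i * A i j * x j}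

/-- Largest value of the Rayleigh quotient. -/
def lambdaMax {d : ℕ} (A : Mat d d) : ℝ :=
  sSup {r : ℝ | ∃ x : Vec d, ‖x‖ = 1 ∧ r = ∑ i, ∑ j, x i * A i j * x j}

/-- A real matrix is Hurwitz if all of its (complex) eigenvalues have
strictly negative real part. -/
def IsHurwitz {d : ℕ} (M : Mat d d) : Prop :=
  ∀ z : ℂ, ((M.map (Complex.ofReal)).charpoly).IsRoot z → z.re < 0

/-- polynomial step size `c₀ (k + k₀)^{-e}`. -/
def stepSize (c₀ k₀ e : ℝ) (k : ℕ) : ℝ := c₀ * ((k : ℝ) + k₀) ^ (-e)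

/-! Both matrices are perturbations of the raw contractions:
`I − β_k B11^k = (I − β_k Δ) + β_k A12 L_k` and `I − γ_k B22^k = (I − γ_k A22) − β_k D_k A12`.
Measuring a matrix in the `Q`-norm instead of the Euclidean operator norm costs at most the factor
`√κ = √(λ_max Q / λ_min Q)`, and `β_k ≤ r_step γ_k`, so the perturbations have `Q`-norm at most
`√κΔ ‖A12‖ ℓ∞ r_step β_k` and `√κ22 ‖A12‖ c∞ r_step γ_k`. The step-size ratio conditions cap these
at half of the contraction margins `aΔ β_k` and `a22 γ_k`. -/

open scoped Matrix.Norms.L2Operator MatrixOrder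

theorem mulVecE_eq_toEuclideanLin {m n : ℕ} (A : Mat m n) (x : Vec n) :
    mulVecE A x = toEuclideanLin A x := rfl

theorem opNorm_eq_norm {m n : ℕ} (A : Mat m n) : opNorm A = ‖A‖ := by
  rw [l2_opNorm_def, ← ContinuousLinearMap.sSup_unitClosedBall_eq_norm, opNorm]
  congr 1
  ext c
  simp [eq_comm, mulVecE_eq_toEuclideanLin]

theorem norm_mulVecE_le {m n : ℕ} (A : Mat m n) (x : Vec n) :
    ‖mulVecE A x‖ ≤ ‖A‖ * ‖x‖ :=
  A.l2_opNorm_mulVec x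

theorem sum_sum_mul_mul_eq_dotProduct {n : ℕ} (M : Mat n n) (x : Fin n → ℝ) :
    ∑ i, ∑ j, x i * M i j * x j = x ⬝ᵥ M *ᵥ x := by
  simp only [dotProduct, mulVec, Finset.mul_sum, mul_assoc]

theorem sum_sum_transpose_mul_self_eq_norm_sq {m n : ℕ} (S : Mat m n) (x : Vec n) :
    ∑ i, ∑ j, x i * (Sᵀ * S) i j * x j = ‖mulVecE S x‖ ^ 2 := by
  rw [sum_sum_mul_mul_eq_dotProduct, ← mulVec_mulVec, dotProduct_mulVec, vecMul_transpose,
    ← real_inner_self_eq_norm_sq, EuclideanSpace.inner_eq_star_dotProduct]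
  simp only [mulVecE_eq_toEuclideanLin, ofLp_toLpLin, toLin'_apply, star_trivial]

theorem exists_qNorm_eq_norm_mulVecE {d : ℕ} {Q : Mat d d} (hQ : Q.PosSemidef) :
    ∃ S : Mat d d, ∀ x, qNorm Q x = ‖mulVecE S x‖ := by
  obtain ⟨S, rfl⟩ := CStarAlgebra.nonneg_iff_eq_star_mul_self.mp hQ.nonneg
  refine ⟨S, fun x => ?_⟩
  rw [qNorm, star_eq_conjTranspose, conjTranspose_eq_transpose_of_trivial,
    sum_sum_transpose_mul_self_eq_norm_sq, Real.sqrt_sq (norm_nonneg _)]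

section QNorm

variable {d : ℕ} {Q : Mat d d}

theorem qNorm_add_le (hQ : Q.PosSemidef) (x y : Vec d) :
    qNorm Q (x + y) ≤ qNorm Q x + qNorm Q y := by
  obtain ⟨S, hS⟩ := exists_qNorm_eq_norm_mulVecE hQ
  simp only [hS, mulVecE_eq_toEuclideanLin, map_add]
  exact norm_add_le _ _

theorem qNorm_smul (hQ : Q.PosSemidef) (c : ℝ) (x : Vec d) :
    qNorm Q (c • x) = |c| * qNorm Q x := by
  obtain ⟨S, hS⟩ := exists_qNorm_eq_norm_mulVecE hQ
  simp only [hS, mulVecE_eq_toEuclideanLin, map_smul, norm_smul, Real.norm_eq_abs]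

theorem qNorm_eq_norm_mul_qNorm_inv_norm_smul (hQ : Q.PosSemidef) (x : Vec d) :
    qNorm Q x = ‖x‖ * qNorm Q (‖x‖⁻¹ • x) := by
  rcases eq_or_ne x 0 with rfl | hx
  · simp [qNorm]
  · rw [qNorm_smul hQ, abs_inv, abs_norm, mul_inv_cancel_left₀ (norm_ne_zero_iff.mpr hx)]

def rayleighSet (Q : Mat d d) : Set ℝ :=
  (fun x : Vec d => ∑ i, ∑ j, x i * Q i j * x j) '' Metric.sphere 0 1

theorem isCompact_rayleighSet (Q : Mat d d) : IsCompact (rayleighSet Q) :=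
  (isCompact_sphere 0 1).image (by fun_prop)

theorem lambdaMin_eq_sInf_rayleighSet (Q : Mat d d) : lambdaMin Q = sInf (rayleighSet Q) := by
  simp [lambdaMin, rayleighSet, Set.image, eq_comm]

theorem lambdaMax_eq_sSup_rayleighSet (Q : Mat d d) : lambdaMax Q = sSup (rayleighSet Q) := by
  simp [lambdaMax, rayleighSet, Set.image, eq_comm]

theorem sqrt_lambdaMin_le_qNorm_of_norm_eq_one {u : Vec d} (hu : ‖u‖ = 1) :
    √(lambdaMin Q) ≤ qNorm Q u := by
  rw [lambdaMin_eq_sInf_rayleighSet, qNorm]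
  exact Real.sqrt_le_sqrt <| csInf_le (isCompact_rayleighSet Q).bddBelow ⟨u, by simpa using hu, rfl⟩

theorem qNorm_le_sqrt_lambdaMax_of_norm_eq_one {u : Vec d} (hu : ‖u‖ = 1) :
    qNorm Q u ≤ √(lambdaMax Q) := by
  rw [lambdaMax_eq_sSup_rayleighSet, qNorm]
  exact Real.sqrt_le_sqrt <| le_csSup (isCompact_rayleighSet Q).bddAbove ⟨u, by simpa using hu, rfl⟩

theorem sqrt_lambdaMin_mul_norm_le_qNorm (hQ : Q.PosSemidef) (x : Vec d) :
    √(lambdaMin Q) * ‖x‖ ≤ qNorm Q x := by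
  rcases eq_or_ne x 0 with rfl | hx
  · simp [qNorm]
  · rw [qNorm_eq_norm_mul_qNorm_inv_norm_smul hQ, mul_comm]
    gcongr
    exact sqrt_lambdaMin_le_qNorm_of_norm_eq_one (norm_smul_inv_norm hx)

theorem qNorm_le_sqrt_lambdaMax_mul_norm (hQ : Q.PosSemidef) (x : Vec d) :
    qNorm Q x ≤ √(lambdaMax Q) * ‖x‖ := by
  rcases eq_or_ne x 0 with rfl | hx
  · simp [qNorm]
  · rw [qNorm_eq_norm_mul_qNorm_inv_norm_smul hQ, mul_comm]
    gcongr
    exact qNorm_le_sqrt_lambdaMax_of_norm_eq_one (norm_smul_inv_norm hx)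

theorem lambdaMin_pos [Nonempty (Fin d)] (hQ : Q.PosDef) : 0 < lambdaMin Q := by
  obtain ⟨u, hu, hmin⟩ := (isCompact_rayleighSet Q).sInf_mem
    ((NormedSpace.sphere_nonempty.mpr zero_le_one).image _)
  have hu0 : WithLp.ofLp u ≠ 0 := mt (WithLp.ofLp_eq_zero 2).mp (ne_zero_of_mem_unit_sphere ⟨u, hu⟩)
  rw [lambdaMin_eq_sInf_rayleighSet, ← hmin]
  simpa [sum_sum_mul_mul_eq_dotProduct] using hQ.dotProduct_mulVec_pos hu0

theorem lambdaMin_nonneg (hQ : Q.PosSemidef) : 0 ≤ lambdaMin Q := by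
  rw [lambdaMin_eq_sInf_rayleighSet]
  refine Real.sInf_nonneg ?_
  rintro _ ⟨x, -, rfl⟩
  simpa [sum_sum_mul_mul_eq_dotProduct] using hQ.dotProduct_mulVec_nonneg (WithLp.ofLp x)

theorem nonempty_fin_of_ne_zero {x : Vec d} (hx : x ≠ 0) : Nonempty (Fin d) := by
  obtain ⟨i, -⟩ := Function.ne_iff.mp (mt (WithLp.ofLp_eq_zero 2).mp hx)
  exact ⟨i⟩

theorem qNorm_pos (hQ : Q.PosDef) {x : Vec d} (hx : x ≠ 0) : 0 < qNorm Q x := by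
  refine Real.sqrt_pos.mpr ?_
  simpa [sum_sum_mul_mul_eq_dotProduct] using
    hQ.dotProduct_mulVec_pos (mt (WithLp.ofLp_eq_zero 2).mp hx)

theorem norm_le_qNorm_div_sqrt_lambdaMin (hQ : Q.PosDef) (x : Vec d) :
    ‖x‖ ≤ qNorm Q x / √(lambdaMin Q) := by
  rcases eq_or_ne x 0 with rfl | hx
  · simp [qNorm]
  · have := nonempty_fin_of_ne_zero hx
    rw [le_div_iff₀ (Real.sqrt_pos.mpr (lambdaMin_pos hQ)), mul_comm]
    exact sqrt_lambdaMin_mul_norm_le_qNorm hQ.posSemidef x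

theorem qNorm_mulVecE_le (hQ : Q.PosDef) (B : Mat d d) (x : Vec d) :
    qNorm Q (mulVecE B x) ≤ √(lambdaMax Q / lambdaMin Q) * ‖B‖ * qNorm Q x := by
  rw [Real.sqrt_div' _ (lambdaMin_nonneg hQ.posSemidef)]
  calc qNorm Q (mulVecE B x) ≤ √(lambdaMax Q) * (‖B‖ * ‖x‖) := by
        grw [qNorm_le_sqrt_lambdaMax_mul_norm hQ.posSemidef, norm_mulVecE_le]
    _ ≤ √(lambdaMax Q) * (‖B‖ * (qNorm Q x / √(lambdaMin Q))) := by
        grw [norm_le_qNorm_div_sqrt_lambdaMin hQ x]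
    _ = √(lambdaMax Q) / √(lambdaMin Q) * ‖B‖ * qNorm Q x := by ring

end QNorm

section QOpNorm

variable {d : ℕ} {Q : Mat d d}

theorem qOpNorm_nonneg (Q B : Mat d d) : 0 ≤ qOpNorm Q B :=
  Real.sSup_nonneg <| by
    rintro _ ⟨x, -, rfl⟩
    exact div_nonneg (Real.sqrt_nonneg _) (Real.sqrt_nonneg _)

theorem qOpNorm_le {B : Mat d d} {c : ℝ} (hc : 0 ≤ c)
    (h : ∀ x, qNorm Q (mulVecE B x) ≤ c * qNorm Q x) : qOpNorm Q B ≤ c :=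
  Real.sSup_le (by rintro _ ⟨x, hx, rfl⟩; exact div_le_of_le_mul₀ (Real.sqrt_nonneg _) hc (h x)) hc

theorem qNorm_mulVecE_le_qOpNorm_mul (hQ : Q.PosDef) (B : Mat d d) (x : Vec d) :
    qNorm Q (mulVecE B x) ≤ qOpNorm Q B * qNorm Q x := by
  rcases eq_or_ne x 0 with rfl | hx
  · simp [qNorm, mulVecE_eq_toEuclideanLin]
  have hbdd : BddAbove {c | ∃ y : Vec d, y ≠ 0 ∧ c = qNorm Q (mulVecE B y) / qNorm Q y} := by
    refine ⟨√(lambdaMax Q / lambdaMin Q) * ‖B‖, ?_⟩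
    rintro _ ⟨y, hy, rfl⟩
    exact div_le_of_le_mul₀ (Real.sqrt_nonneg _) (by positivity) (qNorm_mulVecE_le hQ B y)
  rw [← div_le_iff₀ (qNorm_pos hQ hx)]
  exact le_csSup hbdd ⟨x, hx, rfl⟩

theorem qOpNorm_add_le (hQ : Q.PosDef) (M X : Mat d d) :
    qOpNorm Q (M + X) ≤ qOpNorm Q M + √(lambdaMax Q / lambdaMin Q) * ‖X‖ := by
  refine qOpNorm_le (by have := qOpNorm_nonneg Q M; positivity) fun x => ?_
  rw [mulVecE_eq_toEuclideanLin, map_add, add_mul]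
  exact (qNorm_add_le hQ.posSemidef _ _).trans <|
    add_le_add (qNorm_mulVecE_le_qOpNorm_mul hQ M x) (qNorm_mulVecE_le hQ X x)

theorem qOpNorm_one_sub_smul_add_le {A P : Mat d d} (hQ : Q.PosDef) {t ε : ℝ}
    (ht : 0 ≤ t) (hA : qOpNorm Q (1 - t • A) ≤ 1 - ε * t)
    (hP : √(lambdaMax Q / lambdaMin Q) * ‖P‖ ≤ ε / 2) :
    qOpNorm Q (1 - t • (A + P)) ≤ 1 - 1 / 2 * t * ε := by
  have hsplit : (1 : Mat d d) - t • (A + P) = (1 - t • A) + (-t) • P := by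
    rw [smul_add, neg_smul]; abel
  rw [hsplit]
  refine (qOpNorm_add_le hQ _ _).trans ?_
  rw [norm_smul, Real.norm_eq_abs, abs_neg, abs_of_nonneg ht]
  nlinarith

end QOpNorm

theorem stepSize_pos {c₀ k₀ : ℝ} (hc₀ : 0 < c₀) (hk₀ : 0 < k₀) (e : ℝ) (k : ℕ) :
    0 < stepSize c₀ k₀ e k :=
  mul_pos hc₀ (Real.rpow_pos_of_pos (by positivity) _)

theorem stepSize_div_stepSize_le {c₁ c₂ k₀ e₁ e₂ : ℝ} (hc₁ : 0 ≤ c₁) (hc₂ : 0 < c₂)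
    (hk₀ : 1 ≤ k₀) (he : e₂ ≤ e₁) (k : ℕ) :
    stepSize c₁ k₀ e₁ k / stepSize c₂ k₀ e₂ k ≤ c₁ / c₂ := by
  rw [div_le_div_iff₀ (stepSize_pos hc₂ (by linarith) e₂ k) hc₂, stepSize, stepSize,
    mul_right_comm, mul_assoc c₁]
  have hk : 1 ≤ (k : ℝ) + k₀ := by linarith [k.cast_nonneg (α := ℝ)]
  gcongr

-- For `P = 0` the hypothesis reads `r ≤ 0`, since `a / 0 = 0`.
theorem mul_le_half_of_le_div_two_mul {r a P : ℝ} (hr : 0 < r) (hP : 0 ≤ P)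
    (h : r ≤ a / (2 * P)) : P * r ≤ a / 2 := by
  rcases hP.eq_or_lt with rfl | hP
  · simp only [mul_zero, div_zero] at h; linarith
  · rw [le_div_iff₀ (by positivity)] at h; linarith

theorem contraction_decoupled_recursion_matrices_general
    (dθ dw : ℕ)
    (A12 : Mat dθ dw) (A21 : Mat dw dθ) (A22 : Mat dw dw)
    (Δ : Mat dθ dθ)
    -- Lyapunov matrices and the associated constants
    (Q22 : Mat dw dw) (hQ22pd : Q22.PosDef)
    (QΔ : Mat dθ dθ) (hQΔpd : QΔ.PosDef)
    (a22 aΔ κ22 κΔ : ℝ)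
    (hκ22 : κ22 = lambdaMax Q22 / lambdaMin Q22)
    (hκΔ : κΔ = lambdaMax QΔ / lambdaMin QΔ)
    -- step sizes
    (a b c0β c0γ k0 : ℝ) (hab : a < b)
    (hc0β : 0 < c0β) (hc0γ : 0 < c0γ) (hk0 : 1 ≤ k0)
    (β γ : ℕ → ℝ) (hβ : β = stepSize c0β k0 b) (hγ : γ = stepSize c0γ k0 a)
    -- contraction of the raw matrices (holds for small enough step sizes)
    (hcontrΔ : ∀ k, qOpNorm QΔ (1 - β k • Δ) ≤ 1 - aΔ * β k)
    (hcontr22 : ∀ k, qOpNorm Q22 (1 - γ k • A22) ≤ 1 - a22 * γ k)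
    -- the matrices L_k and D_k
    (L : ℕ → Mat dw dθ)
    (D : ℕ → Mat dw dθ) (hD : ∀ k, D k = L (k + 1) + A22⁻¹ * A21)
    (ℓinf : ℝ) (hℓinf : 0 < ℓinf)
    (hLbound : ∀ k, opNorm (L k) ≤ ℓinf * (β k / γ k))
    -- step-size ratio conditions
    (cinf : ℝ) (hcinf : cinf = ℓinf * (c0β / c0γ) + opNorm (A22⁻¹ * A21))
    (hratio1 : c0β / c0γ ≤ aΔ / (2 * opNorm A12 * Real.sqrt κΔ * ℓinf))
    (hratio2 : c0β / c0γ ≤ a22 / (2 * opNorm A12 * Real.sqrt κ22 * cinf)) :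
    ∀ k : ℕ,
      qOpNorm QΔ (1 - β k • (Δ - A12 * L k)) ≤ 1 - (1 / 2) * β k * aΔ ∧
      qOpNorm Q22 (1 - γ k • ((β k / γ k) • (D k * A12) + A22)) ≤
        1 - (1 / 2) * γ k * a22 := by
  simp only [opNorm_eq_norm] at hLbound hcinf hratio1 hratio2
  set r := c0β / c0γ
  have hβ_nonneg (k : ℕ) : 0 ≤ β k := hβ ▸ (stepSize_pos hc0β (by linarith) b k).le
  have hγ_pos (k : ℕ) : 0 < γ k := hγ ▸ stepSize_pos hc0γ (by linarith) a k
  have hβγ (k : ℕ) : β k / γ k ≤ r := hβ ▸ hγ ▸ stepSize_div_stepSize_le hc0β.le hc0γ hk0 hab.le k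
  have hL (k : ℕ) : ‖L k‖ ≤ ℓinf * r := (hLbound k).trans (by gcongr; exact hβγ k)
  have hDk (k : ℕ) : ‖D k‖ ≤ cinf := hcinf ▸ hD k ▸ (norm_add_le _ _).trans (by gcongr; exact hL _)
  have hr : 0 < r := div_pos hc0β hc0γ
  have hcinf_nonneg : 0 ≤ cinf := hcinf ▸ by positivity
  have key1 := mul_le_half_of_le_div_two_mul (P := ‖A12‖ * (√κΔ * ℓinf)) hr (by positivity)
    (by simpa only [mul_assoc] using hratio1)
  have key2 := mul_le_half_of_le_div_two_mul (P := ‖A12‖ * (√κ22 * cinf)) hr (by positivity)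
    (by simpa only [mul_assoc] using hratio2)
  intro k
  constructor
  · rw [show Δ - A12 * L k = Δ + -(A12 * L k) from sub_eq_add_neg _ _]
    refine qOpNorm_one_sub_smul_add_le hQΔpd (hβ_nonneg k) (hcontrΔ k) ?_
    rw [← hκΔ, norm_neg]
    calc √κΔ * ‖A12 * L k‖ ≤ √κΔ * (‖A12‖ * (ℓinf * r)) := by
          grw [l2_opNorm_mul, hL k]
      _ ≤ aΔ / 2 := by linarith
  · rw [add_comm]
    refine qOpNorm_one_sub_smul_add_le hQ22pd (hγ_pos k).le (hcontr22 k) ?_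
    have hβγ_nonneg : 0 ≤ β k / γ k := div_nonneg (hβ_nonneg k) (hγ_pos k).le
    rw [← hκ22, norm_smul, Real.norm_of_nonneg hβγ_nonneg]
    calc √κ22 * (β k / γ k * ‖D k * A12‖) ≤ √κ22 * (r * (cinf * ‖A12‖)) := by
          grw [l2_opNorm_mul, hDk k, hβγ k]
      _ ≤ a22 / 2 := by linarith

/-- **Contraction of the decoupled TTSA recursion matrices.**
Under the Hurwitz assumption, the contraction of `I − β_k Δ` and `I − γ_k A22`
in the Lyapunov norms, the bound `‖L_k‖ ≤ ℓ∞ β_k/γ_k` and the step-size ratio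
conditions, the decoupled recursion matrices satisfy
`‖I − β_k B11^k‖_{QΔ} ≤ 1 − β_k aΔ/2` and `‖I − γ_k B22^k‖_{Q22} ≤ 1 − γ_k a22/2`. -/
theorem contraction_decoupled_recursion_matrices
    (dθ dw : ℕ)
    (A11 : Mat dθ dθ) (A12 : Mat dθ dw) (A21 : Mat dw dθ) (A22 : Mat dw dw)
    (hA22 : IsUnit A22.det)
    (Δ : Mat dθ dθ) (hΔdef : Δ = A11 - A12 * A22⁻¹ * A21) (hΔ : IsUnit Δ.det)
    -- (A4)
    (hHur22 : IsHurwitz (-A22)) (hHurΔ : IsHurwitz (-Δ))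
    -- Lyapunov matrices and the associated constants
    (Q22 : Mat dw dw) (hQ22pd : Q22.PosDef) (hQ22 : A22ᵀ * Q22 + Q22 * A22 = 1)
    (QΔ : Mat dθ dθ) (hQΔpd : QΔ.PosDef) (hQΔ : Δᵀ * QΔ + QΔ * Δ = 1)
    (a22 aΔ κ22 κΔ : ℝ)
    (ha22 : a22 = 1 / (2 * opNorm Q22)) (haΔ : aΔ = 1 / (2 * opNorm QΔ))
    (hκ22 : κ22 = lambdaMax Q22 / lambdaMin Q22)
    (hκΔ : κΔ = lambdaMax QΔ / lambdaMin QΔ)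
    -- step sizes
    (a b c0β c0γ k0 : ℝ) (ha : 1 / 2 < a) (hab : a < b) (hb : b < 1)
    (hc0β : 0 < c0β) (hc0γ : 0 < c0γ) (hk0 : 1 ≤ k0)
    (β γ : ℕ → ℝ) (hβ : β = stepSize c0β k0 b) (hγ : γ = stepSize c0γ k0 a)
    -- contraction of the raw matrices (holds for small enough step sizes)
    (hcontrΔ : ∀ k, qOpNorm QΔ (1 - β k • Δ) ≤ 1 - aΔ * β k)
    (hcontr22 : ∀ k, qOpNorm Q22 (1 - γ k • A22) ≤ 1 - a22 * γ k)
    -- the matrices L_k and D_k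
    (L : ℕ → Mat dw dθ) (hL0 : L 0 = 0)
    (hLrec : ∀ k, L (k + 1) =
      (L k - γ k • (A22 * L k) + β k • (A22⁻¹ * A21 * (Δ - A12 * L k))) *
        (1 - β k • (Δ - A12 * L k))⁻¹)
    (D : ℕ → Mat dw dθ) (hD : ∀ k, D k = L (k + 1) + A22⁻¹ * A21)
    (ℓinf : ℝ) (hℓinf : 0 < ℓinf)
    (hLbound : ∀ k, opNorm (L k) ≤ ℓinf * (β k / γ k))
    -- step-size ratio conditions
    (cinf : ℝ) (hcinf : cinf = ℓinf * (c0β / c0γ) + opNorm (A22⁻¹ * A21))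
    (hratio1 : c0β / c0γ ≤ aΔ / (2 * opNorm A12 * Real.sqrt κΔ * ℓinf))
    (hratio2 : c0β / c0γ ≤ a22 / (2 * opNorm A12 * Real.sqrt κ22 * cinf)) :
    ∀ k : ℕ,
      qOpNorm QΔ (1 - β k • (Δ - A12 * L k)) ≤ 1 - (1 / 2) * β k * aΔ ∧
      qOpNorm Q22 (1 - γ k • ((β k / γ k) • (D k * A12) + A22)) ≤
        1 - (1 / 2) * γ k * a22 :=
  contraction_decoupled_recursion_matrices_general dθ dw A12 A21 A22 Δ Q22 hQ22pd QΔ hQΔpd a22 aΔ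
    κ22 κΔ hκ22 hκΔ a b c0β c0γ k0 hab hc0β hc0γ hk0 β γ hβ hγ hcontrΔ hcontr22 L D hD ℓinf hℓinf
    hLbound cinf hcinf hratio1 hratio2

end
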